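/- Let ℓ > 4 and let w_1, …, w_{2ℓ} be positive integers with ∑_{j∈[2ℓ]} w_j = 2t such that every J ⊆ [2ℓ] with |J| < ℓ satisfies ∑_{j∈J} w_j < t. Construct the fair-division-with-social-impact instance with two agents a_1, a_2 and items g_1, …, g_{2ℓ}, G_1, G_2, where for both agents v(g_j) = w_j and s(g_j) = 1; v_{a_1}(G_1) = 0, s_{a_1}(G_1) = 1, v_{a_2}(G_1) = t, s_{a_2}(G_1) = 0; and v_{a_1}(G_2) = t, s_{a_1}(G_2) = 0, v_{a_2}(G_2) = 0, s_{a_2}(G_2) = 1. Then this instance admits an allocation that is simultaneously SIM and WSA-EF1 if and only if there exists J ⊆ [2ℓ] with |J| = ℓ and ∑_{j∈J} w_j = t. -/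

import Mathlib

/-!
SIM forces every agent `i` to keep its own special item `G_{i+1}`, which it values at `0`
and the other agent at `t`. If the small items are split into sums `S₀ + S₁ = 2t`, the
WSA-EF1 condition of agent `i` towards `j` then yields `S_j ≤ S_i`: removing one item from
`A_j` lowers its value by at most `t`, and the socially-aware alternative
`(S_j + t) c ≤ S_i (c + 1)` (with `c` the number of small items of `j`) fails as soon as
`S_i < t < S_j`. Hence `S₀ = S₁ = t`, and since sets of fewer than `ℓ` items weigh less
than `t`, both halves have exactly `ℓ` items. Conversely a balanced split, with each agent
holding its special item, is WSA-EF1 by removing that item from the envied bundle.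
-/

open Finset

variable {N M : Type*}

/-- The bundle of agent `i` under allocation `A` (items mapped to `i`). -/
def bundle [Fintype M] [DecidableEq N] (A : M → N) (i : N) : Finset M :=
  Finset.univ.filter fun g => A g = i

/-- The (additive) value of a bundle `S` under the item-values `f`. -/
def val (f : M → ℕ) (S : Finset M) : ℕ := ∑ g ∈ S, f g

/-- An allocation is social impact maximizing (SIM). -/
def SIM [Fintype N] [Fintype M] [DecidableEq N] (s : N → M → ℕ) (A : M → N) : Prop :=
  ∀ A' : M → N, ∑ i : N, val (s i) (bundle A i) ≥ ∑ i : N, val (s i) (bundle A' i)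

/-- WSA-EF1: for every pair of agents `i, j`, either there is an item `g` with
`v_i(A_i) ≥ v_i(A_j \ {g})`, or `v_i(A_j) · s_i(A_j) ≤ v_i(A_i) · s_j(A_j)`. -/
def WSAEF1 [Fintype M] [DecidableEq N] [DecidableEq M]
    (v s : N → M → ℕ) (A : M → N) : Prop :=
  ∀ i j : N,
    (∃ g : M, val (v i) (bundle A i) ≥ val (v i) ((bundle A j).erase g)) ∨
    val (v i) (bundle A j) * val (s i) (bundle A j) ≤
      val (v i) (bundle A i) * val (s j) (bundle A j)

section Allocation

variable [Fintype M] [DecidableEq N]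

lemma sum_val_bundle [Fintype N] (s : N → M → ℕ) (A : M → N) :
    ∑ i, val (s i) (bundle A i) = ∑ g, s (A g) g := by
  rw [← sum_fiberwise univ A fun g => s (A g) g]
  refine sum_congr rfl fun i _ => sum_congr rfl fun g hg => ?_
  rw [(mem_filter.1 hg).2]

lemma sim_iff_forall_le [Fintype N] (s : N → M → ℕ) (A : M → N) :
    SIM s A ↔ ∀ g i, s i g ≤ s (A g) g := by
  classical
  refine ⟨fun h g i => ?_, fun h A' => ?_⟩
  · by_contra! hlt
    have hsum : ∑ g', s (A g') g' < ∑ g', s (Function.update A g i g') g' := by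
      refine sum_lt_sum (fun g' _ => ?_) ⟨g, mem_univ g, by simpa using hlt⟩
      rcases eq_or_ne g' g with rfl | hne
      · simpa using hlt.le
      · simp [hne]
    have := h (Function.update A g i)
    rw [sum_val_bundle, sum_val_bundle] at this
    omega
  · rw [ge_iff_le, sum_val_bundle, sum_val_bundle]
    exact sum_le_sum fun g _ => h g (A' g)

lemma bundle_sumElim {M' : Type*} [Fintype M'] (a : M → N) (b : M' → N) (i : N) :
    bundle (Sum.elim a b) i = (bundle a i).disjSum (bundle b i) := by
  ext (g | g) <;> simp [bundle]

lemma bundle_id [Fintype N] (i : N) : bundle id i = {i} := by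
  ext; simp [bundle]

end Allocation

lemma val_le_val_erase_add [DecidableEq M] {f : M → ℕ} {t : ℕ} (hf : ∀ g, f g ≤ t)
    (S : Finset M) (g : M) : val f S ≤ val f (S.erase g) + t := by
  by_cases hg : g ∈ S
  · rw [_root_.val, _root_.val, ← sum_erase_add S f hg]
    exact Nat.add_le_add_left (hf g) _
  · rw [erase_eq_of_notMem hg]
    exact Nat.le_add_right _ _

lemma le_of_add_eq_two_mul_of_mul_le {x y t c : ℕ} (hxy : x + y = 2 * t) (hc : 0 < c)
    (h : (y + t) * c ≤ x * (c + 1)) : y ≤ x := by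
  by_contra! hlt
  nlinarith

lemma card_eq_of_sum_eq {ℓ t : ℕ} {w : Fin (2 * ℓ) → ℕ} (hsum : ∑ j, w j = 2 * t)
    (hsmall : ∀ J : Finset (Fin (2 * ℓ)), J.card < ℓ → ∑ j ∈ J, w j < t)
    {J : Finset (Fin (2 * ℓ))} (hJ : ∑ j ∈ J, w j = t) : J.card = ℓ := by
  have hJc : ∑ j ∈ Jᶜ, w j = t := by
    have := sum_add_sum_compl J w
    omega
  have h₁ : ℓ ≤ J.card := not_lt.1 fun h => (hsmall J h).ne hJ
  have h₂ : ℓ ≤ Jᶜ.card := not_lt.1 fun h => (hsmall Jᶜ h).ne hJc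
  have h₃ : J.card ≤ 2 * ℓ := card_le_univ J |>.trans_eq (Fintype.card_fin _)
  rw [card_compl, Fintype.card_fin] at h₂
  omega

namespace EquitablePartition

variable {n : ℕ}

/-- Items `Sum.inl j` are the `g_j`; `Sum.inr k` is `G_{k+1}`, the item agent `k` values at `0`. -/
def value (w : Fin n → ℕ) (t : ℕ) (i : Fin 2) : Fin n ⊕ Fin 2 → ℕ :=
  Sum.elim w fun k => if k = i then 0 else t

def impact (i : Fin 2) : Fin n ⊕ Fin 2 → ℕ :=
  Sum.elim (fun _ => 1) fun k => if k = i then 1 else 0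

lemma sim_impact_iff (A : Fin n ⊕ Fin 2 → Fin 2) :
    SIM impact A ↔ ∃ a : Fin n → Fin 2, A = Sum.elim a id := by
  rw [sim_iff_forall_le]
  constructor
  · intro h
    refine ⟨A ∘ Sum.inl, funext fun g => ?_⟩
    rcases g with j | k
    · rfl
    · show A (Sum.inr k) = k
      by_contra hk
      simpa [impact, Ne.symm hk] using h (Sum.inr k) k
  · rintro ⟨a, rfl⟩ (j | k) i
    · simp [impact]
    · simp only [impact, Sum.elim_inr, id]
      split_ifs <;> omega

variable (a : Fin n → Fin 2) (w : Fin n → ℕ) (t : ℕ) (i j : Fin 2)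

lemma val_value_bundle :
    val (value w t i) (bundle (Sum.elim a id) j) = val w (bundle a j) + if j = i then 0 else t := by
  rw [bundle_sumElim, bundle_id, _root_.val, sum_disjSum, sum_singleton]
  rfl

lemma val_impact_bundle :
    val (impact i) (bundle (Sum.elim a id) j) = (bundle a j).card + if j = i then 1 else 0 := by
  rw [bundle_sumElim, bundle_id, _root_.val, sum_disjSum, sum_singleton]
  simp [impact]

lemma val_bundle_le_of_wsaef1 (hwt : ∀ j, w j ≤ t)
    (h : WSAEF1 (value w t) impact (Sum.elim a id)) {i j : Fin 2} (hij : i ≠ j)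
    (hS : val w (bundle a i) + val w (bundle a j) = 2 * t) :
    val w (bundle a j) ≤ val w (bundle a i) := by
  rcases h i j with ⟨g, hg⟩ | hprod
  · have hvt : ∀ x, value w t i x ≤ t := by
      rintro (x | k)
      exacts [hwt x, by simp only [value, Sum.elim_inr]; split_ifs <;> omega]
    have := val_le_val_erase_add hvt (bundle (Sum.elim a id) j) g
    rw [val_value_bundle, if_neg hij.symm] at this
    rw [val_value_bundle, if_pos rfl] at hg
    omega
  · simp only [val_value_bundle, val_impact_bundle, if_neg hij.symm,
      add_zero] at hprod
    rcases Nat.eq_zero_or_pos (bundle a j).card with hc | hc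
    · simp [card_eq_zero.1 hc, _root_.val]
    · exact le_of_add_eq_two_mul_of_mul_le hS hc hprod

/-- Agent `i` is envy-free towards `A_j` once `G_{j+1}` is removed from it. -/
lemma wsaef1_of_val_bundle_le (hS : ∀ i j, val w (bundle a j) ≤ val w (bundle a i)) :
    WSAEF1 (value w t) impact (Sum.elim a id) := by
  intro i j
  left
  refine ⟨Sum.inr j, ?_⟩
  have hmem : Sum.inr j ∈ bundle (Sum.elim a id) j := by simp [bundle]
  have herase := sum_erase_add _ (value w t i) hmem
  rw [← _root_.val, ← _root_.val, val_value_bundle] at herase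
  rw [ge_iff_le, val_value_bundle, if_pos rfl]
  change _ + (if j = i then 0 else t) = _ at herase
  have := hS i j
  omega

lemma val_bundle_zero_add_val_bundle_one :
    val w (bundle a 0) + val w (bundle a 1) = ∑ j, w j := by
  rw [← Fin.sum_univ_two fun i => val w (bundle a i), sum_val_bundle fun _ => w]

end EquitablePartition

open EquitablePartition in
theorem sim_wsaef1_iff_equitable_partition_general
    (ℓ t : ℕ) (hℓ : 4 < ℓ) (w : Fin (2 * ℓ) → ℕ)
    (hsum : ∑ j, w j = 2 * t)
    (hsmall : ∀ J : Finset (Fin (2 * ℓ)), J.card < ℓ → ∑ j ∈ J, w j < t) :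
    (∃ A : (Fin (2 * ℓ) ⊕ Fin 2) → Fin 2,
        SIM (fun i : Fin 2 => Sum.elim (fun _ : Fin (2 * ℓ) => 1)
          (fun k : Fin 2 => if k = i then 1 else 0)) A ∧
        WSAEF1 (fun i : Fin 2 => Sum.elim (fun j : Fin (2 * ℓ) => w j)
          (fun k : Fin 2 => if k = i then 0 else t))
          (fun i : Fin 2 => Sum.elim (fun _ : Fin (2 * ℓ) => 1)
          (fun k : Fin 2 => if k = i then 1 else 0)) A) ↔
    (∃ J : Finset (Fin (2 * ℓ)), J.card = ℓ ∧ ∑ j ∈ J, w j = t) := by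
  have hwt (j) : w j ≤ t := by
    simpa using (hsmall {j} (by rw [card_singleton]; omega)).le
  constructor
  · rintro ⟨A, hsim, hef⟩
    obtain ⟨a, rfl⟩ := (sim_impact_iff A).1 hsim
    have hS := val_bundle_zero_add_val_bundle_one a w
    have h₁ := val_bundle_le_of_wsaef1 a w t hwt hef zero_ne_one (by omega)
    have h₀ := val_bundle_le_of_wsaef1 a w t hwt hef one_ne_zero (by omega)
    have hJ : ∑ j ∈ bundle a 0, w j = t := by rw [← _root_.val]; omega
    exact ⟨bundle a 0, card_eq_of_sum_eq hsum hsmall hJ, hJ⟩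
  · rintro ⟨J, -, hJ⟩
    set a : Fin (2 * ℓ) → Fin 2 := fun j => if j ∈ J then 0 else 1
    have ha : bundle a 0 = J := by ext; simp [a, bundle]
    have h₀ : val w (bundle a 0) = t := by rw [ha]; exact hJ
    have h₁ : val w (bundle a 1) = t := by
      have := val_bundle_zero_add_val_bundle_one a w
      omega
    refine ⟨Sum.elim a id, (sim_impact_iff _).2 ⟨a, rfl⟩, wsaef1_of_val_bundle_le a w t ?_⟩
    intro i j
    fin_cases i <;> fin_cases j <;> simp [h₀, h₁]

/-- Equitable-partition reduction for WSA-EF1: two agents `0 = a₁`, `1 = a₂`;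
items `Sum.inl j = g_j` (value `w j`, impact `1` for both) and `Sum.inr k = G_{k+1}`
(`v_{a₁}(G₁) = 0, s_{a₁}(G₁) = 1, v_{a₂}(G₁) = t, s_{a₂}(G₁) = 0` and
`v_{a₁}(G₂) = t, s_{a₁}(G₂) = 0, v_{a₂}(G₂) = 0, s_{a₂}(G₂) = 1`).
A SIM and WSA-EF1 allocation exists iff there is `J` of size `ℓ` with
`∑_{j ∈ J} w_j = t`. -/
theorem sim_wsaef1_iff_equitable_partition
    (ℓ t : ℕ) (hℓ : 4 < ℓ) (w : Fin (2 * ℓ) → ℕ) (hw : ∀ j, 0 < w j)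
    (hsum : ∑ j, w j = 2 * t)
    (hsmall : ∀ J : Finset (Fin (2 * ℓ)), J.card < ℓ → ∑ j ∈ J, w j < t) :
    (∃ A : (Fin (2 * ℓ) ⊕ Fin 2) → Fin 2,
        SIM (fun i : Fin 2 => Sum.elim (fun _ : Fin (2 * ℓ) => 1)
          (fun k : Fin 2 => if k = i then 1 else 0)) A ∧
        WSAEF1 (fun i : Fin 2 => Sum.elim (fun j : Fin (2 * ℓ) => w j)
          (fun k : Fin 2 => if k = i then 0 else t))
          (fun i : Fin 2 => Sum.elim (fun _ : Fin (2 * ℓ) => 1)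
          (fun k : Fin 2 => if k = i then 1 else 0)) A) ↔
    (∃ J : Finset (Fin (2 * ℓ)), J.card = ℓ ∧ ∑ j ∈ J, w j = t) :=
  sim_wsaef1_iff_equitable_partition_general ℓ t hℓ w hsum hsmall
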